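/- arXiv:1506.03293 — 2 statements merged into one kernel-verified Lean document; each statement's English description precedes it below -/
import Mathlib

section
/- For every fixed k, for all sufficiently large n: ℙ( |φ_{N,u} − φ_{N,v}| ≤ 100 √(K log N) for all u, v ∈ V_N that are nearest neighbors in ℤ² ) ≥ 1 − e^{−n/10}. -/
open MeasureTheory ProbabilityTheory Real Filter
open scoped NNReal ENNReal Classical

noncomputable section

abbrev Vertex : Type := ℤ × ℤ

/-- ℓ∞ distance on ℤ². -/
def dinf (u v : Vertex) : ℤ := max |u.1 - v.1| |u.2 - v.2|

/-- Rectangle of lattice points with lower-left corner `c`, width `w`, height `h`. -/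
def rectAt (c : Vertex) (w h : ℕ) : Finset Vertex :=
  Finset.Icc c (c.1 + w - 1, c.2 + h - 1)

/-- Lattice box with lower-left corner `c` and side length `s`. -/
def boxAt (c : Vertex) (s : ℕ) : Finset Vertex := rectAt c s s

/-- The box `V_N` of side length `N` with lower-left corner at the origin. -/
def vbox (N : ℕ) : Finset Vertex := boxAt (0, 0) N

/-- The concentric box `B*` of side length `3s` around the box with corner `c` and side `s`. -/
def starBox (c : Vertex) (s : ℕ) : Finset Vertex := boxAt (c.1 - s, c.2 - s) (3 * s)

/-- Lower-left corners of the lattice boxes of side length `2^j` containing `z`. -/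
def corners (j : ℕ) (z : Vertex) : Finset Vertex :=
  Finset.Icc (z.1 - 2 ^ j + 1, z.2 - 2 ^ j + 1) z

/-- ψ_{j,z} = Σ_{B ∈ 𝓑_{jk}(z)} √k b_{jk,B}. -/
def psi {Ω : Type} (b : ℕ × Vertex → Ω → ℝ) (k j : ℕ) (z : Vertex) (ω : Ω) : ℝ :=
  ∑ c ∈ corners (j * k) z, Real.sqrt k * b (j * k, c) ω

/-- The K-coarse MBRW φ_{N,z} = Σ_{j=0}^{m-1} ψ_{j,z} with m = ⌊n/k⌋. -/
def phi {Ω : Type} (b : ℕ × Vertex → Ω → ℝ) (n k : ℕ) (z : Vertex) (ω : Ω) : ℝ :=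
  ∑ j ∈ Finset.range (n / k), psi b k j z ω

/-- The underlying field `b_{j,B}`: independent centered Gaussians, Var(b_{j,B}) = 2^{-2j},
indexed by the level `j` and the lower-left corner of the box `B`. -/
def GaussianSetup {Ω : Type} [MeasureSpace Ω] (b : ℕ × Vertex → Ω → ℝ) : Prop :=
  (∀ i, Measurable (b i)) ∧
  iIndepFun b ℙ ∧
  ∀ (j : ℕ) (c : Vertex), Measure.map (b (j, c)) ℙ = gaussianReal 0 (((2 : ℝ≥0) ^ (2 * j))⁻¹)

/-- Nearest neighbors in ℤ². -/
def adj (u v : Vertex) : Prop := |u.1 - v.1| + |u.2 - v.2| = 1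

/-- A path in `V_N`: a nonempty list of vertices of `V_N`, consecutive ones nearest neighbors. -/
def IsPathIn (N : ℕ) (P : List Vertex) : Prop :=
  P ≠ [] ∧ (∀ w ∈ P, w ∈ vbox N) ∧ P.Chain' adj

/-- The path `P` connects `u` to `v`. -/
def Connects (P : List Vertex) (u v : Vertex) : Prop :=
  P.head? = some u ∧ P.getLast? = some v

/-- FPP distance between `u, v ∈ V_N` for the vertex weights `exp (γ f w)`. -/
def fppOf (N : ℕ) (γ : ℝ) (f : Vertex → ℝ) (u v : Vertex) : ℝ :=
  sInf {s : ℝ | ∃ P : List Vertex, IsPathIn N P ∧ Connects P u v ∧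
    s = (P.map fun w => Real.exp (γ * f w)).sum}

/-- The LQG vertex weight e^{γ φ_{N,v}}. -/
def lqgWeight {Ω : Type} (b : ℕ × Vertex → Ω → ℝ) (n k : ℕ) (γ : ℝ) (v : Vertex) (ω : Ω) : ℝ :=
  Real.exp (γ * phi b n k v ω)

/-- μ_γ × μ_γ of the set of pairs satisfying `A`. -/
def muPair {Ω : Type} (b : ℕ × Vertex → Ω → ℝ) (n k : ℕ) (γ : ℝ)
    (A : Vertex × Vertex → Prop) (ω : Ω) : ℝ :=
  (∑ p ∈ vbox (2 ^ n) ×ˢ vbox (2 ^ n),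
      Set.indicator {p | A p} (fun p => lqgWeight b n k γ p.1 ω * lqgWeight b n k γ p.2 ω) p) /
    (∑ w ∈ vbox (2 ^ n), lqgWeight b n k γ w ω) ^ 2

/-- μ_γ of the set of vertices satisfying `A`. -/
def muSet {Ω : Type} (b : ℕ × Vertex → Ω → ℝ) (n k : ℕ) (γ : ℝ)
    (A : Vertex → Prop) (ω : Ω) : ℝ :=
  (∑ v ∈ vbox (2 ^ n), Set.indicator {v | A v} (fun v => lqgWeight b n k γ v ω) v) /
    ∑ w ∈ vbox (2 ^ n), lqgWeight b n k γ w ω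

/-- σ_{z,w} = E[φ_{N,z} φ_{N,w}]. -/
def covPhi {Ω : Type} [MeasureSpace Ω] (b : ℕ × Vertex → Ω → ℝ) (n k : ℕ) (z w : Vertex) : ℝ :=
  ∫ ω, phi b n k z ω * phi b n k w ω ∂ℙ

/-- Maximum of `f` over a finite set of vertices (as an `sSup`). -/
def fmax (B : Finset Vertex) (f : Vertex → ℝ) : ℝ := sSup (f '' ↑B)

def jzero (δ : ℝ) (n k : ℕ) : ℕ := ⌊(1 - δ ^ 2 / 2) * ((n / k : ℕ) : ℝ)⌋₊
def Kone (k : ℕ) : ℕ := 2 ^ (k - 2)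
def Ktwo (k q : ℕ) : ℕ := 2 ^ k / (q + 1)
def lzero (δ : ℝ) (n k : ℕ) : ℕ := k * ⌊δ ^ 2 * ((n / k : ℕ) : ℝ)⌋₊
def lone (δ κ : ℝ) (n k : ℕ) : ℕ :=
  Nat.log 2 (⌈((2 : ℝ) ^ n) ^ ((1 : ℝ) - 2 * κ)⌉₊ + 2 ^ (lzero δ n k + 1)) - 1

/-- A q-dependent {0,1}-valued field on `V_N` with ℙ(ξ_w = 1) ≥ p. -/
def BernoulliField {Ω : Type} [MeasureSpace Ω] (ξ : Vertex → Ω → ℝ) (N q : ℕ) (p : ℝ) : Prop :=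
  (∀ w, Measurable (ξ w)) ∧
  (∀ w ω, ξ w ω = 0 ∨ ξ w ω = 1) ∧
  (∀ A B : Set Vertex, (∀ z ∈ A, ∀ w ∈ B, (q : ℤ) < dinf z w) →
      IndepFun (fun ω (z : A) => ξ z ω) (fun ω (w : B) => ξ w ω) ℙ) ∧
  (∀ w ∈ vbox N, ENNReal.ofReal p ≤ ℙ {ω | ξ w ω = 1})

/-- The Bernoulli field together with its independence from the Gaussian field. -/
def BernoulliSetup {Ω : Type} [MeasureSpace Ω] (b : ℕ × Vertex → Ω → ℝ)
    (ξ : Vertex → Ω → ℝ) (N q : ℕ) (p : ℝ) : Prop :=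
  BernoulliField ξ N q p ∧
  IndepFun (fun ω (i : ℕ × Vertex) => b i ω) (fun ω (w : Vertex) => ξ w ω) ℙ

/-- A good path: open, and all Gaussian values at most 7δ log N. -/
def GoodPath {Ω : Type} (b : ℕ × Vertex → Ω → ℝ) (ξ : Vertex → Ω → ℝ) (n k : ℕ)
    (δ : ℝ) (P : List Vertex) (ω : Ω) : Prop :=
  (∀ w ∈ P, ξ w ω = 1) ∧ ∀ w ∈ P, phi b n k w ω ≤ 7 * δ * Real.log (2 ^ n)

/-- A `B`-crossing for the box with corner `c` and side `L`: a good top-bottom crossing `Q^V`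
of `B` with `|Q^V| ≤ 4 L^{1+δ}`, and a good left-right crossing `Q^H` of the 4L × L rectangle
`ÁB` with `|Q^H| ≤ 16 L^{1+δ}`. -/
def CrossingAt {Ω : Type} (b : ℕ × Vertex → Ω → ℝ) (ξ : Vertex → Ω → ℝ) (n k : ℕ)
    (δ : ℝ) (c : Vertex) (L : ℕ) (ω : Ω) : Prop :=
  (∃ QV : List Vertex, QV ≠ [] ∧ QV.Chain' adj ∧ (∀ w ∈ QV, w ∈ boxAt c L) ∧
      (∃ u, QV.head? = some u ∧ u.2 = c.2 + L - 1) ∧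
      (∃ v, QV.getLast? = some v ∧ v.2 = c.2) ∧
      ((QV.length : ℝ) ≤ 4 * (L : ℝ) ^ ((1 : ℝ) + δ)) ∧ GoodPath b ξ n k δ QV ω) ∧
  (∃ QH : List Vertex, QH ≠ [] ∧ QH.Chain' adj ∧ (∀ w ∈ QH, w ∈ rectAt c (4 * L) L) ∧
      (∃ u, QH.head? = some u ∧ u.1 = c.1) ∧
      (∃ v, QH.getLast? = some v ∧ v.1 = c.1 + 4 * L - 1) ∧
      ((QH.length : ℝ) ≤ 16 * (L : ℝ) ^ ((1 : ℝ) + δ)) ∧ GoodPath b ξ n k δ QH ω)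

/-- Regression coefficient a_z (and, with `u`, `v` swapped, b_z). -/
def acoef {Ω : Type} [MeasureSpace Ω] (b : ℕ × Vertex → Ω → ℝ) (n k : ℕ)
    (u v z : Vertex) : ℝ :=
  (((k * (n / k) : ℕ) : ℝ) * covPhi b n k z u - covPhi b n k z v * covPhi b n k u v) /
    ((((k * (n / k) : ℕ) : ℝ)) ^ 2 - covPhi b n k u v ^ 2)

/-!
At level `j` the boxes of side `2^{jk}` containing two neighbours `u, v` differ in at most
`2 · 2^{jk}` boxes, so the level-`j` increment `ψ_{j,u} - ψ_{j,v}` is a centred Gaussian of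
variance at most `2k · 2^{-jk}`. Hence it exceeds the threshold `ε_j = 25 √(K log N) 2^{-jk/2}`
with probability at most `2 e^{-8n}`, while `∑_j ε_j ≤ 100 √(K log N)`. A union bound over the
`N^4 n` pairs of (edge, level) then leaves probability at most `e^{-n/10}` for a bad edge.
-/

namespace ProbabilityTheory.HasSubgaussianMGF

variable {Ω : Type*} {mΩ : MeasurableSpace Ω} {μ : Measure Ω} {X : Ω → ℝ} {c : ℝ≥0}

lemma mono (h : HasSubgaussianMGF X c μ) {d : ℝ≥0} (hcd : c ≤ d) :
    HasSubgaussianMGF X d μ where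
  integrable_exp_mul := h.integrable_exp_mul
  mgf_le t := (h.mgf_le t).trans (exp_le_exp.2 (by gcongr))

lemma of_map_eq_gaussianReal (hX : AEMeasurable X μ) (h : μ.map X = gaussianReal 0 c) :
    HasSubgaussianMGF X c μ := by
  refine of_map (X := id) hX ?_
  rw [h]
  exact ⟨integrable_exp_mul_gaussianReal, fun t => by simp [mgf_id_gaussianReal]⟩

lemma measureReal_abs_ge_le [IsFiniteMeasure μ] (h : HasSubgaussianMGF X c μ) {ε : ℝ}
    (hε : 0 ≤ ε) : μ.real {ω | ε ≤ |X ω|} ≤ 2 * exp (-ε ^ 2 / (2 * c)) := by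
  have hsplit : {ω | ε ≤ |X ω|} = {ω | ε ≤ X ω} ∪ {ω | ε ≤ (-X) ω} := by
    ext ω
    simp only [Set.mem_ofPred_eq, Set.mem_union, Pi.neg_apply, le_abs]
  calc μ.real {ω | ε ≤ |X ω|}
      ≤ μ.real {ω | ε ≤ X ω} + μ.real {ω | ε ≤ (-X) ω} := hsplit ▸ measureReal_union_le _ _
    _ ≤ exp (-ε ^ 2 / (2 * c)) + exp (-ε ^ 2 / (2 * c)) :=
        add_le_add (h.measure_ge_le hε) (h.neg.measure_ge_le hε)
    _ = 2 * exp (-ε ^ 2 / (2 * c)) := by ring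

end ProbabilityTheory.HasSubgaussianMGF

lemma ofReal_one_sub_le_of_measureReal_compl_le {α : Type*} [MeasurableSpace α] {μ : Measure α}
    [IsProbabilityMeasure μ] {s : Set α} {p : ℝ} (h : μ.real sᶜ ≤ p) :
    ENNReal.ofReal (1 - p) ≤ μ s := by
  rw [ENNReal.ofReal_le_iff_le_toReal (measure_ne_top μ s)]
  have := measureReal_union_le (μ := μ) s sᶜ
  rw [Set.union_compl_self, probReal_univ] at this
  rw [← measureReal_def]
  linarith

open Finset

lemma card_Icc_sdiff_Icc_le (a b t : ℤ) : (#(Icc (a - t) a \ Icc (b - t) b) : ℤ) ≤ |a - b| := by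
  have hsub : Icc (a - t) a \ Icc (b - t) b ⊆ Icc (a - t) (b - t - 1) ∪ Icc (b + 1) a := by
    intro x
    simp only [Finset.mem_sdiff, mem_Icc, mem_union]
    omega
  have := (card_le_card hsub).trans (card_union_le _ _)
  simp only [Int.card_Icc] at this
  rcases abs_cases (a - b) with ⟨h, _⟩ | ⟨h, _⟩ <;> rw [h] <;> omega

lemma card_product_sdiff_product_le {α β : Type*} [DecidableEq α] [DecidableEq β]
    (s s' : Finset α) (t t' : Finset β) :
    #(s ×ˢ t \ s' ×ˢ t') ≤ #(s \ s') * #t + #s * #(t \ t') := by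
  have hsub : s ×ˢ t \ s' ×ˢ t' ⊆ (s \ s') ×ˢ t ∪ s ×ˢ (t \ t') := by
    intro x
    simp only [Finset.mem_sdiff, mem_product, mem_union]
    tauto
  simpa only [card_product] using (card_le_card hsub).trans (card_union_le _ _)

lemma sum_ite_sub_ite_sq {α : Type*} [DecidableEq α] (A B : Finset α) :
    ∑ c ∈ A ∪ B, ((if c ∈ A then 1 else 0) - (if c ∈ B then 1 else 0) : ℝ) ^ 2
      = #(A \ B) + #(B \ A) := by
  have hterm : ∀ c, ((if c ∈ A then 1 else 0) - (if c ∈ B then 1 else 0) : ℝ) ^ 2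
      = (if c ∈ A \ B then 1 else 0) + (if c ∈ B \ A then 1 else 0) := fun c => by
    simp only [Finset.mem_sdiff]; split_ifs <;> simp_all
  simp only [hterm, sum_add_distrib, sum_ite_mem, sum_const, nsmul_eq_mul, mul_one]
  rw [inter_eq_right.2 (sdiff_subset.trans subset_union_left),
    inter_eq_right.2 (sdiff_subset.trans subset_union_right)]

lemma adj_symm {u v : Vertex} (h : adj u v) : adj v u := by
  rwa [adj, abs_sub_comm v.1, abs_sub_comm v.2]

lemma card_vbox (N : ℕ) : #(vbox N) = N ^ 2 := by
  simp only [vbox, boxAt, rectAt, card_Icc_prod, Int.card_Icc]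
  rw [show (0 : ℤ) + N - 1 + 1 - 0 = N by ring, Int.toNat_natCast, sq]

lemma card_corners_sdiff_le (J : ℕ) (u v : Vertex) :
    (#(corners J u \ corners J v) : ℤ) ≤ 2 ^ J * (|u.1 - v.1| + |u.2 - v.2|) := by
  have hcorners : ∀ z : Vertex, corners J z =
      Icc (z.1 - (2 ^ J - 1)) z.1 ×ˢ Icc (z.2 - (2 ^ J - 1)) z.2 := fun z => by
    rw [corners, Icc_prod_def]; ring_nf
  have hside : ∀ a : ℤ, #(Icc (a - (2 ^ J - 1)) a) = 2 ^ J := fun a => by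
    rw [Int.card_Icc, show a + 1 - (a - (2 ^ J - 1)) = ((2 ^ J : ℕ) : ℤ) by push_cast; ring]
    rfl
  have h := card_product_sdiff_product_le (Icc (u.1 - (2 ^ J - 1)) u.1)
    (Icc (v.1 - (2 ^ J - 1)) v.1) (Icc (u.2 - (2 ^ J - 1)) u.2) (Icc (v.2 - (2 ^ J - 1)) v.2)
  rw [← hcorners, ← hcorners, hside, hside] at h
  have h1 := card_Icc_sdiff_Icc_le u.1 v.1 (2 ^ J - 1)
  have h2 := card_Icc_sdiff_Icc_le u.2 v.2 (2 ^ J - 1)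
  calc (#(corners J u \ corners J v) : ℤ)
      ≤ #(Icc (u.1 - (2 ^ J - 1)) u.1 \ Icc (v.1 - (2 ^ J - 1)) v.1) * 2 ^ J
        + 2 ^ J * #(Icc (u.2 - (2 ^ J - 1)) u.2 \ Icc (v.2 - (2 ^ J - 1)) v.2) := by
        exact_mod_cast h
    _ ≤ |u.1 - v.1| * 2 ^ J + 2 ^ J * |u.2 - v.2| := by gcongr
    _ = 2 ^ J * (|u.1 - v.1| + |u.2 - v.2|) := by ring

lemma card_corners_sdiff_le_of_adj (J : ℕ) {u v : Vertex} (h : adj u v) :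
    #(corners J u \ corners J v) ≤ 2 ^ J := by
  have := card_corners_sdiff_le J u v
  rw [adj] at h
  rw [h, mul_one] at this
  exact_mod_cast this

lemma psi_sub_psi_eq_sum {Ω : Type} (b : ℕ × Vertex → Ω → ℝ) (k j : ℕ) (u v : Vertex) (ω : Ω) :
    psi b k j u ω - psi b k j v ω
      = ∑ c ∈ corners (j * k) u ∪ corners (j * k) v,
          √k * ((if c ∈ corners (j * k) u then 1 else 0) - (if c ∈ corners (j * k) v then 1 else 0))
            * b (j * k, c) ω := by
  simp only [mul_sub, sub_mul, mul_ite, ite_mul, mul_one, mul_zero, zero_mul, sum_sub_distrib,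
    sum_ite_mem, union_inter_cancel_left, union_inter_cancel_right, psi]

lemma abs_phi_sub_phi_le {Ω : Type} (b : ℕ × Vertex → Ω → ℝ) (n k : ℕ) (u v : Vertex) (ω : Ω)
    (ε : ℕ → ℝ) (h : ∀ j < n / k, |psi b k j u ω - psi b k j v ω| ≤ ε j) :
    |phi b n k u ω - phi b n k v ω| ≤ ∑ j ∈ range (n / k), ε j := by
  rw [phi, phi, ← sum_sub_distrib]
  exact (abs_sum_le_sum_abs _ _).trans (sum_le_sum fun j hj => h j (mem_range.1 hj))

def levelThreshold (n k j : ℕ) : ℝ := 25 * √(2 ^ k * log (2 ^ n)) * ((√2 ^ k)⁻¹) ^ j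

lemma levelThreshold_sq (n k j : ℕ) :
    levelThreshold n k j ^ 2 = 625 * (2 ^ k * (n * log 2)) * ((2 : ℝ) ^ (j * k))⁻¹ := by
  have hlog : 0 ≤ (2 : ℝ) ^ k * log (2 ^ n) := by rw [Real.log_pow]; positivity
  have hratio : ((√2 ^ k)⁻¹ ^ j) ^ 2 = ((√2 ^ 2) ^ (j * k))⁻¹ := by ring
  rw [levelThreshold, mul_pow, mul_pow, Real.sq_sqrt hlog, hratio, Real.sq_sqrt zero_le_two,
    Real.log_pow]
  ring

lemma sum_levelThreshold_le {k : ℕ} (hk : 1 ≤ k) (n m : ℕ) :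
    ∑ j ∈ range m, levelThreshold n k j ≤ 100 * √(2 ^ k * log (2 ^ n)) := by
  set x : ℝ := (√2 ^ k)⁻¹
  have hx0 : 0 ≤ x := by positivity
  have hx : x ≤ 3 / 4 := by
    have h2 : (4 / 3 : ℝ) ≤ √2 := Real.le_sqrt_of_sq_le (by norm_num)
    have : (4 / 3 : ℝ) ≤ √2 ^ k := h2.trans (le_self_pow₀ (by linarith) (by omega))
    exact (inv_anti₀ (by norm_num) this).trans_eq (by norm_num)
  have hgeom : ∑ j ∈ range m, x ^ j ≤ 4 := by
    rw [range_eq_Ico]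
    refine (geom_sum_Ico_le_of_lt_one hx0 (by linarith)).trans ?_
    rw [pow_zero, div_le_iff₀ (by linarith)]
    linarith
  simp only [levelThreshold, ← mul_sum]
  nlinarith [Real.sqrt_nonneg (2 ^ k * log (2 ^ n))]

section GaussianField

variable {Ω : Type} [MeasureSpace Ω] {b : ℕ × Vertex → Ω → ℝ}

lemma GaussianSetup.hasSubgaussianMGF_sum_mul (hb : GaussianSetup b) (J : ℕ) (a : Vertex → ℝ)
    (s : Finset Vertex) :
    HasSubgaussianMGF (fun ω => ∑ c ∈ s, a c * b (J, c) ω)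
      (∑ c ∈ s, ‖a c‖₊ ^ 2 * ((2 : ℝ≥0) ^ (2 * J))⁻¹) ℙ := by
  have hindep : iIndepFun (fun c ω => a c * b (J, c) ω) ℙ :=
    (hb.2.1.precomp (Prod.mk_right_injective J)).comp (fun c x => a c * x)
      (fun c => measurable_const_mul _)
  exact HasSubgaussianMGF.sum_of_iIndepFun hindep fun c _ =>
    ((HasSubgaussianMGF.of_map_eq_gaussianReal (hb.1 _).aemeasurable (hb.2.2 J c)).const_mul
      (a c)).mono (le_of_eq (by ext; simp; rfl))

lemma GaussianSetup.hasSubgaussianMGF_psi_sub (hb : GaussianSetup b) (k j : ℕ) {u v : Vertex}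
    (huv : adj u v) :
    HasSubgaussianMGF (fun ω => psi b k j u ω - psi b k j v ω)
      (2 * k * ((2 : ℝ≥0) ^ (j * k))⁻¹) ℙ := by
  simp only [psi_sub_psi_eq_sum]
  refine (hb.hasSubgaussianMGF_sum_mul _ _ _).mono ?_
  rw [← NNReal.coe_le_coe]
  simp only [NNReal.coe_sum, NNReal.coe_mul, NNReal.coe_pow, coe_nnnorm, Real.norm_eq_abs, sq_abs,
    NNReal.coe_inv, NNReal.coe_ofNat, NNReal.coe_natCast, mul_pow,
    Real.sq_sqrt (Nat.cast_nonneg k), ← sum_mul, ← mul_sum, sum_ite_sub_ite_sq]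
  have hcard : (#(corners (j * k) u \ corners (j * k) v)
      + #(corners (j * k) v \ corners (j * k) u) : ℝ) ≤ 2 * 2 ^ (j * k) := by
    rw [two_mul]
    exact_mod_cast add_le_add (card_corners_sdiff_le_of_adj (j * k) huv)
      (card_corners_sdiff_le_of_adj (j * k) (adj_symm huv))
  calc (k : ℝ) * (#(corners (j * k) u \ corners (j * k) v)
        + #(corners (j * k) v \ corners (j * k) u)) * ((2 : ℝ) ^ (2 * (j * k)))⁻¹
      ≤ k * (2 * 2 ^ (j * k)) * ((2 : ℝ) ^ (2 * (j * k)))⁻¹ := by gcongr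
    _ = 2 * k * ((2 : ℝ) ^ (j * k))⁻¹ := by rw [two_mul (j * k), pow_add]; field_simp

lemma GaussianSetup.measureReal_levelThreshold_le_abs_psi_sub
    [IsProbabilityMeasure (ℙ : Measure Ω)] (hb : GaussianSetup b) {k : ℕ} (hk : 1 ≤ k)
    (n j : ℕ) {u v : Vertex} (huv : adj u v) :
    (ℙ : Measure Ω).real {ω | levelThreshold n k j ≤ |psi b k j u ω - psi b k j v ω|}
      ≤ 2 * exp (-(8 * n)) := by
  have hε : 0 ≤ levelThreshold n k j := by
    unfold levelThreshold; rw [Real.log_pow]; positivity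
  refine ((hb.hasSubgaussianMGF_psi_sub k j huv).measureReal_abs_ge_le hε).trans ?_
  gcongr
  have hk0 : (0 : ℝ) < k := by exact_mod_cast hk
  have hkK : (k : ℝ) ≤ 2 ^ k := by exact_mod_cast Nat.lt_two_pow_self.le
  have hlog2 : (1 / 2 : ℝ) < log 2 := by linarith [Real.log_two_gt_d9]
  have hn : (0 : ℝ) ≤ n := Nat.cast_nonneg n
  have hP : (0 : ℝ) < ((2 : ℝ) ^ (j * k))⁻¹ := by positivity
  have : (k : ℝ) * (n * (1 / 2)) ≤ 2 ^ k * (n * log 2) :=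
    mul_le_mul hkK (by gcongr) (by positivity) (by positivity)
  push_cast
  rw [levelThreshold_sq, neg_div, neg_le_neg_iff, le_div_iff₀ (by positivity)]
  nlinarith [mul_le_mul_of_nonneg_right this hP.le, mul_nonneg (mul_nonneg hk0.le hn) hP.le]

end GaussianField

def edgeLevels (n k : ℕ) : Finset ((Vertex × Vertex) × ℕ) :=
  ((vbox (2 ^ n) ×ˢ vbox (2 ^ n)).filter fun p => adj p.1 p.2) ×ˢ range (n / k)

lemma card_edgeLevels_le (n k : ℕ) : (#(edgeLevels n k) : ℝ) ≤ ((2 : ℝ) ^ n) ^ 4 * n := by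
  have : #(edgeLevels n k) ≤ (2 ^ n) ^ 2 * (2 ^ n) ^ 2 * n := by
    rw [edgeLevels, card_product, card_range, ← card_vbox, ← card_product]
    exact Nat.mul_le_mul (card_filter_le _ _) (Nat.div_le_self n k)
  calc (#(edgeLevels n k) : ℝ) ≤ ((2 ^ n) ^ 2 * (2 ^ n) ^ 2 * n : ℕ) := by exact_mod_cast this
    _ = ((2 : ℝ) ^ n) ^ 4 * n := by push_cast; ring

lemma compl_setOf_abs_phi_sub_le_subset {Ω : Type} (b : ℕ × Vertex → Ω → ℝ) {k : ℕ}
    (hk : 1 ≤ k) (n : ℕ) :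
    {ω | ∀ u ∈ vbox (2 ^ n), ∀ v ∈ vbox (2 ^ n), adj u v →
        |phi b n k u ω - phi b n k v ω| ≤ 100 * √(2 ^ k * log (2 ^ n))}ᶜ
      ⊆ ⋃ x ∈ edgeLevels n k,
          {ω | levelThreshold n k x.2 ≤ |psi b k x.2 x.1.1 ω - psi b k x.2 x.1.2 ω|} := by
  intro ω hω
  simp only [Set.mem_compl_iff, Set.mem_ofPred_eq, not_forall, not_le] at hω
  obtain ⟨u, hu, v, hv, huv, hlarge⟩ := hω
  by_contra! hsmall
  simp only [Set.mem_iUnion, not_exists, edgeLevels, mem_product, mem_filter, mem_range,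
    Set.mem_ofPred_eq, not_le] at hsmall
  refine hlarge.not_ge ((abs_phi_sub_phi_le b n k u v ω _ fun j hj => ?_).trans
    (sum_levelThreshold_le hk n _))
  exact (hsmall ((u, v), j) ⟨⟨⟨hu, hv⟩, huv⟩, hj⟩).le

lemma two_pow_pow_four_mul_tail_le (n : ℕ) :
    ((2 : ℝ) ^ n) ^ 4 * n * (2 * exp (-(8 * n))) ≤ exp (-(n : ℝ) / 10) := by
  have hpow : (2 : ℝ) ^ n ≤ exp n := by
    calc (2 : ℝ) ^ n ≤ exp 1 ^ n := by gcongr; linarith [add_one_le_exp 1]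
      _ = exp n := by rw [← Real.exp_nat_mul, mul_one]
  have hlin : 2 * (n : ℝ) ≤ exp (2 * n) := by linarith [add_one_le_exp (2 * (n : ℝ))]
  calc ((2 : ℝ) ^ n) ^ 4 * n * (2 * exp (-(8 * n)))
      = ((2 : ℝ) ^ n) ^ 4 * (2 * n) * exp (-(8 * n)) := by ring
    _ ≤ exp n ^ 4 * exp (2 * n) * exp (-(8 * n)) := by gcongr
    _ = exp (-(2 * n)) := by rw [← Real.exp_nat_mul, ← Real.exp_add, ← Real.exp_add]; ring_nf
    _ ≤ exp (-(n : ℝ) / 10) := by gcongr; linarith [(Nat.cast_nonneg n : (0 : ℝ) ≤ n)]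

/-- **Lemma 2.3, second part (continuity estimate).** For all large n, with probability at
least 1 - e^{-n/10}, |φ_{N,u} - φ_{N,v}| ≤ 100 √(K log N) for all nearest neighbors
u, v ∈ V_N. -/
theorem statement6 {Ω : Type} [MeasureSpace Ω] [IsProbabilityMeasure (ℙ : Measure Ω)]
    (b : ℕ × Vertex → Ω → ℝ) (hb : GaussianSetup b) (k : ℕ) (hk : 1 ≤ k) :
    ∀ᶠ n : ℕ in atTop,
      ℙ {ω | ∀ u ∈ vbox (2 ^ n), ∀ v ∈ vbox (2 ^ n), adj u v →
            |phi b n k u ω - phi b n k v ω| ≤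
              100 * Real.sqrt ((2 ^ k : ℝ) * Real.log (2 ^ n))}
        ≥ ENNReal.ofReal (1 - Real.exp (-(n : ℝ) / 10)) := by
  refine Eventually.of_forall fun n => ofReal_one_sub_le_of_measureReal_compl_le ?_
  calc _ ≤ (ℙ : Measure Ω).real (⋃ x ∈ edgeLevels n k,
          {ω | levelThreshold n k x.2 ≤ |psi b k x.2 x.1.1 ω - psi b k x.2 x.1.2 ω|}) :=
        measureReal_mono (compl_setOf_abs_phi_sub_le_subset b hk n) (measure_ne_top _ _)
    _ ≤ ∑ x ∈ edgeLevels n k, (ℙ : Measure Ω).real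
          {ω | levelThreshold n k x.2 ≤ |psi b k x.2 x.1.1 ω - psi b k x.2 x.1.2 ω|} :=
        measureReal_biUnion_finset_le _ _
    _ ≤ ∑ _x ∈ edgeLevels n k, 2 * exp (-(8 * n)) := sum_le_sum fun x hx =>
        hb.measureReal_levelThreshold_le_abs_psi_sub hk n x.2
          (mem_filter.1 (mem_product.1 hx).1).2
    _ = #(edgeLevels n k) * (2 * exp (-(8 * n))) := by rw [sum_const, nsmul_eq_mul]
    _ ≤ exp (-(n : ℝ) / 10) := (mul_le_mul_of_nonneg_right (card_edgeLevels_le n k)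
        (by positivity)).trans (two_pow_pow_four_mul_tail_le n)

end
end

section
/- There exists a universal constant C such that for every k ≥ 1, every j ≥ 0, and every box B ∈ 𝓑_{jk}: E[ max_{z ∈ B ∩ ℤ²} ψ_{j,z} ] ≤ C √k. -/
open MeasureTheory ProbabilityTheory Real Filter
open scoped NNReal ENNReal Classical

noncomputable section

/-!
Restricted to a box `B` of side `L = 2 ^ (j k)`, `z ↦ ψ_{j,z}` is a Gaussian field in which each
`ψ_{j,z}` has variance `k`, and `ψ_{j,u} - ψ_{j,u'}` is a sum of independent Gaussians over the
symmetric difference of the sets of boxes containing `u` and `u'`, so has variance at most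
`4 k ‖u - u'‖_∞ / L`. Chain dyadically: project `B` onto the grids of mesh `2 ^ T` anchored at its
corner. At level `T` the increments range over at most `4 ^ (jk - T)` points and have variance at
most `8 k 2 ^ (T - jk)`, so the sub-Gaussian maximal inequality
`t E max ≤ log N + v t² / 2` bounds their expected maximum by `√k` times a term summable in
`jk - T`.
-/

namespace MeasureTheory

variable {Ω ι : Type*} {m : MeasurableSpace Ω} {μ : Measure Ω}

lemma integrable_finset_sup' {s : Finset ι} (hs : s.Nonempty) {X : ι → Ω → ℝ}
    (hX : ∀ i ∈ s, Integrable (X i) μ) : Integrable (fun ω => s.sup' hs fun i => X i ω) μ := by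
  have h : (fun ω => s.sup' hs fun i => X i ω) = s.sup' hs X :=
    funext fun ω => (Finset.sup'_apply hs X ω).symm
  rw [h]
  exact Finset.sup'_induction (p := fun f => Integrable f μ) hs X (fun _ hf _ hg => hf.sup hg) hX

end MeasureTheory

namespace ProbabilityTheory

variable {Ω ι : Type*} {m : MeasurableSpace Ω} {μ : Measure Ω}

lemma hasSubgaussianMGF_of_map_eq_gaussianReal {X : Ω → ℝ} {v : ℝ≥0} (hX : AEMeasurable X μ)
    (h : μ.map X = gaussianReal 0 v) : HasSubgaussianMGF X v μ := by
  rw [← HasSubgaussianMGF.id_map_iff hX, h]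
  exact ⟨fun t => integrable_exp_mul_gaussianReal t, fun t => by simp [mgf_id_gaussianReal]⟩

lemma HasSubgaussianMGF.mono_s8 {X : Ω → ℝ} {c d : ℝ≥0} (h : HasSubgaussianMGF X c μ) (hcd : c ≤ d) :
    HasSubgaussianMGF X d μ where
  integrable_exp_mul := h.integrable_exp_mul
  mgf_le t := (h.mgf_le t).trans <| Real.exp_le_exp.2 <| by gcongr

lemma iIndepFun.indepFun_finsetSum_finsetSum {X : ι → Ω → ℝ} (hX : iIndepFun X μ)
    (hmeas : ∀ i, Measurable (X i)) {S T : Finset ι} (hST : Disjoint S T) :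
    IndepFun (fun ω => ∑ i ∈ S, X i ω) (fun ω => ∑ i ∈ T, X i ω) μ := by
  have h := (hX.indepFun_finset S T hST hmeas).comp
    (φ := fun x : S → ℝ => ∑ i, x i) (ψ := fun x : T → ℝ => ∑ i, x i) (by fun_prop) (by fun_prop)
  convert h using 1 <;> ext ω
  · exact (Finset.sum_coe_sort S fun i => X i ω).symm
  · exact (Finset.sum_coe_sort T fun i => X i ω).symm

lemma HasSubgaussianMGF.sum_sub_sum_of_iIndepFun [DecidableEq ι] {X : ι → Ω → ℝ} {c : ℝ≥0}
    (hX : iIndepFun X μ) (hmeas : ∀ i, Measurable (X i))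
    (hsub : ∀ i, HasSubgaussianMGF (X i) c μ) (S T : Finset ι) :
    HasSubgaussianMGF (fun ω => ∑ i ∈ S, X i ω - ∑ i ∈ T, X i ω)
      (((S \ T).card + (T \ S).card) * c) μ := by
  have hsum : ∀ U : Finset ι, HasSubgaussianMGF (fun ω => ∑ i ∈ U, X i ω) (U.card * c) μ := by
    intro U
    simpa [Finset.sum_const, nsmul_eq_mul] using
      HasSubgaussianMGF.sum_of_iIndepFun hX (s := U) fun i _ => hsub i
  have h := (hsum (S \ T)).sub_of_indepFun (hsum (T \ S))
    (hX.indepFun_finsetSum_finsetSum hmeas disjoint_sdiff_sdiff)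
  rw [add_mul]
  refine h.congr (ae_of_all _ fun ω => ?_)
  exact Finset.sum_sdiff_sub_sum_sdiff

lemma mul_integral_sup'_le_of_hasSubgaussianMGF [IsProbabilityMeasure μ] {s : Finset ι}
    (hs : s.Nonempty) {X : ι → Ω → ℝ} {c : ℝ≥0} (hX : ∀ i ∈ s, HasSubgaussianMGF (X i) c μ)
    (t : ℝ) :
    t * ∫ ω, s.sup' hs (fun i => X i ω) ∂μ ≤ Real.log s.card + c * t ^ 2 / 2 := by
  set M := fun ω => s.sup' hs fun i => X i ω
  have hM : Integrable M μ := integrable_finset_sup' hs fun i hi => (hX i hi).integrable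
  have hexp_le_sum : ∀ ω, rexp (t * M ω) ≤ ∑ i ∈ s, rexp (t * X i ω) := by
    intro ω
    obtain ⟨i, hi, hMi⟩ := Finset.exists_mem_eq_sup' hs fun i => X i ω
    rw [show M ω = X i ω from hMi]
    exact Finset.single_le_sum (f := fun i => rexp (t * X i ω)) (fun _ _ => (exp_pos _).le) hi
  have hsum : Integrable (fun ω => ∑ i ∈ s, rexp (t * X i ω)) μ :=
    integrable_finsetSum _ fun i hi => (hX i hi).integrable_exp_mul t
  have hexp : Integrable (fun ω => rexp (t * M ω)) μ :=
    hsum.mono' (continuous_exp.comp_aestronglyMeasurable (hM.aestronglyMeasurable.const_mul t))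
      (ae_of_all _ fun ω => by simpa [abs_of_pos (exp_pos _)] using hexp_le_sum ω)
  have hjensen : rexp (t * ∫ ω, M ω ∂μ) ≤ ∫ ω, rexp (t * M ω) ∂μ := by
    rw [← integral_const_mul]
    exact convexOn_exp.map_integral_le continuousOn_exp isClosed_univ
      (ae_of_all _ fun _ => Set.mem_univ _) (hM.const_mul t) hexp
  have hmgf : ∫ ω, rexp (t * M ω) ∂μ ≤ s.card * rexp (c * t ^ 2 / 2) :=
    calc ∫ ω, rexp (t * M ω) ∂μ ≤ ∫ ω, ∑ i ∈ s, rexp (t * X i ω) ∂μ :=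
          integral_mono hexp hsum hexp_le_sum
      _ = ∑ i ∈ s, mgf (X i) μ t :=
          integral_finsetSum _ fun i hi => (hX i hi).integrable_exp_mul t
      _ ≤ ∑ i ∈ s, rexp (c * t ^ 2 / 2) := Finset.sum_le_sum fun i hi => (hX i hi).mgf_le t
      _ = s.card * rexp (c * t ^ 2 / 2) := by rw [Finset.sum_const, nsmul_eq_mul]
  have hcard : (0 : ℝ) < s.card := by exact_mod_cast hs.card_pos
  calc t * ∫ ω, M ω ∂μ = Real.log (rexp (t * ∫ ω, M ω ∂μ)) := (Real.log_exp _).symm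
    _ ≤ Real.log (s.card * rexp (c * t ^ 2 / 2)) :=
        Real.log_le_log (exp_pos _) (hjensen.trans hmgf)
    _ = Real.log s.card + c * t ^ 2 / 2 := by
        rw [Real.log_mul hcard.ne' (exp_pos _).ne', Real.log_exp]

end ProbabilityTheory

lemma mem_boxAt {c z : Vertex} {L : ℕ} :
    z ∈ boxAt c L ↔ (c.1 ≤ z.1 ∧ z.1 < c.1 + L) ∧ (c.2 ≤ z.2 ∧ z.2 < c.2 + L) := by
  simp only [boxAt, rectAt, Finset.mem_Icc, Prod.le_def]
  omega

lemma corner_mem_boxAt (c : Vertex) (s : ℕ) : c ∈ boxAt c (2 ^ s) := by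
  rw [mem_boxAt]
  have : (0 : ℤ) < 2 ^ s := by positivity
  push_cast
  omega

lemma boxAt_two_pow_nonempty (c : Vertex) (s : ℕ) : (boxAt c (2 ^ s)).Nonempty :=
  ⟨c, corner_mem_boxAt c s⟩

def gridFloor (a : ℤ) (T : ℕ) (x : ℤ) : ℤ := a + 2 ^ T * ((x - a) / 2 ^ T)

lemma gridFloor_zero (a x : ℤ) : gridFloor a 0 x = x := by
  simp [gridFloor]

lemma sub_gridFloor (a x : ℤ) (T : ℕ) : x - gridFloor a T x = (x - a) % 2 ^ T := by
  rw [gridFloor, Int.emod_def]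
  ring

lemma gridFloor_succ_gridFloor (a x : ℤ) (T : ℕ) :
    gridFloor a (T + 1) (gridFloor a T x) = gridFloor a (T + 1) x := by
  have hT : (0 : ℤ) < 2 ^ T := by positivity
  simp only [gridFloor, add_sub_cancel_left, pow_succ,
    Int.mul_ediv_mul_of_pos _ _ hT, Int.ediv_ediv_of_nonneg hT.le]

lemma gridFloor_eq_self_of_lt {a x : ℤ} {T : ℕ} (h₁ : a ≤ x) (h₂ : x < a + 2 ^ T) :
    gridFloor a T x = a := by
  simp [gridFloor, Int.ediv_eq_zero_of_lt (sub_nonneg.2 h₁) (by linarith)]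

lemma gridFloor_mem_image_Ico {a x : ℤ} {s T : ℕ} (hT : T ≤ s) (h₁ : a ≤ x)
    (h₂ : x < a + 2 ^ s) :
    gridFloor a T x ∈ (Finset.Ico 0 (2 ^ (s - T) : ℤ)).image fun q => a + 2 ^ T * q := by
  have hT' : (0 : ℤ) < 2 ^ T := by positivity
  have hs : (2 : ℤ) ^ s = 2 ^ T * 2 ^ (s - T) := by rw [← pow_add, Nat.add_sub_cancel' hT]
  refine Finset.mem_image.2 ⟨(x - a) / 2 ^ T, Finset.mem_Ico.2 ⟨?_, ?_⟩, rfl⟩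
  · exact Int.ediv_nonneg (by linarith) hT'.le
  · exact Int.ediv_lt_of_lt_mul hT' (by rw [mul_comm, ← hs]; linarith)

def boxFloor (c : Vertex) (T : ℕ) (z : Vertex) : Vertex :=
  (gridFloor c.1 T z.1, gridFloor c.2 T z.2)

lemma boxFloor_zero (c z : Vertex) : boxFloor c 0 z = z := by
  simp [boxFloor, gridFloor_zero]

lemma boxFloor_succ_boxFloor (c z : Vertex) (T : ℕ) :
    boxFloor c (T + 1) (boxFloor c T z) = boxFloor c (T + 1) z := by
  simp [boxFloor, gridFloor_succ_gridFloor]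

lemma boxFloor_eq_corner {c z : Vertex} {s : ℕ} (hz : z ∈ boxAt c (2 ^ s)) :
    boxFloor c s z = c := by
  rw [mem_boxAt] at hz
  push_cast at hz
  simp [boxFloor, gridFloor_eq_self_of_lt hz.1.1 hz.1.2, gridFloor_eq_self_of_lt hz.2.1 hz.2.2]

lemma card_image_boxFloor_le (c : Vertex) {s T : ℕ} (hT : T ≤ s) :
    ((boxAt c (2 ^ s)).image (boxFloor c T)).card ≤ 4 ^ (s - T) := by
  set I := Finset.Ico 0 (2 ^ (s - T) : ℤ)
  calc ((boxAt c (2 ^ s)).image (boxFloor c T)).card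
      ≤ ((I ×ˢ I).image fun q : ℤ × ℤ => (c.1 + 2 ^ T * q.1, c.2 + 2 ^ T * q.2)).card := by
        refine Finset.card_le_card fun u hu => ?_
        obtain ⟨z, hz, rfl⟩ := Finset.mem_image.1 hu
        rw [mem_boxAt] at hz
        push_cast at hz
        obtain ⟨q₁, hq₁, e₁⟩ := Finset.mem_image.1 (gridFloor_mem_image_Ico hT hz.1.1 hz.1.2)
        obtain ⟨q₂, hq₂, e₂⟩ := Finset.mem_image.1 (gridFloor_mem_image_Ico hT hz.2.1 hz.2.2)
        exact Finset.mem_image.2 ⟨(q₁, q₂), Finset.mem_product.2 ⟨hq₁, hq₂⟩, by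
          simp [boxFloor, e₁, e₂]⟩
    _ ≤ (I ×ˢ I).card := Finset.card_image_le
    _ = 4 ^ (s - T) := by
        rw [Finset.card_product, Int.card_Ico, sub_zero,
          show (2 : ℤ) ^ (s - T) = ((2 ^ (s - T) : ℕ) : ℤ) by push_cast; rfl, Int.toNat_natCast,
          ← mul_pow]
        norm_num

lemma abs_sub_boxFloor_le (c u : Vertex) (T : ℕ) :
    |u.1 - (boxFloor c T u).1| ≤ (2 ^ T : ℕ) ∧ |u.2 - (boxFloor c T u).2| ≤ (2 ^ T : ℕ) := by
  have hT : (0 : ℤ) < 2 ^ T := by positivity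
  simp only [boxFloor, sub_gridFloor, Nat.cast_pow, Nat.cast_ofNat]
  constructor <;> rw [abs_of_nonneg (Int.emod_nonneg _ hT.ne')] <;>
    exact (Int.emod_lt_of_pos _ hT).le

lemma Finset.card_product_sdiff_product_le {α β : Type*} [DecidableEq α] [DecidableEq β]
    (A A' : Finset α) (B B' : Finset β) :
    ((A ×ˢ B : Finset (α × β)) \ A' ×ˢ B').card ≤
      (A \ A').card * B.card + A.card * (B \ B').card := by
  calc ((A ×ˢ B : Finset (α × β)) \ A' ×ˢ B').card ≤ ((A \ A') ×ˢ B ∪ A ×ˢ (B \ B')).card := by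
        refine Finset.card_le_card fun p hp => ?_
        simp only [Finset.mem_sdiff, Finset.mem_product, Finset.mem_union] at hp ⊢
        tauto
    _ ≤ (A \ A').card * B.card + A.card * (B \ B').card :=
        (Finset.card_union_le _ _).trans_eq (by rw [Finset.card_product, Finset.card_product])

lemma card_Icc_sdiff_Icc_le_s8 {a a' n : ℤ} {D : ℕ} (h : |a - a'| ≤ D) :
    (Finset.Icc (a - n + 1) a \ Finset.Icc (a' - n + 1) a').card ≤ D := by
  calc (Finset.Icc (a - n + 1) a \ Finset.Icc (a' - n + 1) a').card
        ≤ (Finset.Icc (a - n + 1) (a' - n) ∪ Finset.Icc (a' + 1) a).card := by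
        refine Finset.card_le_card fun x hx => ?_
        simp only [Finset.mem_sdiff, Finset.mem_union, Finset.mem_Icc] at hx ⊢
        omega
    _ ≤ (Finset.Icc (a - n + 1) (a' - n)).card + (Finset.Icc (a' + 1) a).card :=
        Finset.card_union_le _ _
    _ ≤ D := by
        rw [Int.card_Icc, Int.card_Icc]
        rw [abs_le] at h
        omega

lemma corners_eq_product (s : ℕ) (z : Vertex) :
    corners s z = Finset.Icc (z.1 - 2 ^ s + 1) z.1 ×ˢ Finset.Icc (z.2 - 2 ^ s + 1) z.2 := by
  rw [corners, Finset.Icc_prod_def]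

lemma card_Icc_sub_pow_add_one (a : ℤ) (s : ℕ) :
    (Finset.Icc (a - 2 ^ s + 1) a).card = 2 ^ s := by
  rw [Int.card_Icc, show a + 1 - (a - 2 ^ s + 1) = ((2 ^ s : ℕ) : ℤ) by push_cast; ring,
    Int.toNat_natCast]

lemma card_corners (s : ℕ) (z : Vertex) : (corners s z).card = 2 ^ s * 2 ^ s := by
  rw [corners_eq_product, Finset.card_product, card_Icc_sub_pow_add_one,
    card_Icc_sub_pow_add_one]

lemma card_corners_sdiff_le_s8 {s D : ℕ} {u u' : Vertex} (h₁ : |u.1 - u'.1| ≤ D)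
    (h₂ : |u.2 - u'.2| ≤ D) : (corners s u \ corners s u').card ≤ 2 * D * 2 ^ s := by
  rw [corners_eq_product, corners_eq_product]
  refine (Finset.card_product_sdiff_product_le _ _ _ _).trans ?_
  rw [card_Icc_sub_pow_add_one, card_Icc_sub_pow_add_one]
  have := Nat.mul_le_mul_right (2 ^ s) (card_Icc_sdiff_Icc_le_s8 (n := 2 ^ s) h₁)
  have := Nat.mul_le_mul_left (2 ^ s) (card_Icc_sdiff_Icc_le_s8 (n := 2 ^ s) h₂)
  linarith

lemma card_corners_sdiff_add_card_sdiff_boxFloor_le (s T : ℕ) (c u : Vertex) :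
    (corners s u \ corners s (boxFloor c T u)).card +
      (corners s (boxFloor c T u) \ corners s u).card ≤ 4 * 2 ^ T * 2 ^ s := by
  obtain ⟨h₁, h₂⟩ := abs_sub_boxFloor_le c u T
  have := card_corners_sdiff_le_s8 (s := s) h₁ h₂
  have := card_corners_sdiff_le_s8 (s := s) (abs_sub_comm u.1 _ ▸ h₁) (abs_sub_comm u.2 _ ▸ h₂)
  linarith

lemma sup'_le_add_sum_sup'_sub {α : Type*} [DecidableEq α] {B : Finset α} (hB : B.Nonempty)
    (proj : ℕ → α → α) (n : ℕ) (c : α) (h₀ : ∀ z ∈ B, proj 0 z = z) (hn : ∀ z ∈ B, proj n z = c)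
    (hproj : ∀ T, ∀ z ∈ B, proj (T + 1) (proj T z) = proj (T + 1) z) (f : α → ℝ) :
    B.sup' hB f ≤ f c + ∑ T ∈ Finset.range n,
      (B.image (proj T)).sup' (hB.image _) fun u => f u - f (proj (T + 1) u) := by
  refine Finset.sup'_le hB f fun z hz => ?_
  have htel : f z - f c = ∑ T ∈ Finset.range n, (f (proj T z) - f (proj (T + 1) z)) := by
    rw [Finset.sum_range_sub', h₀ z hz, hn z hz]
  have hstep : ∀ T ∈ Finset.range n, f (proj T z) - f (proj (T + 1) z) ≤
      (B.image (proj T)).sup' (hB.image _) fun u => f u - f (proj (T + 1) u) := fun T _ => by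
    rw [← hproj T z hz]
    exact Finset.le_sup' (fun u => f u - f (proj (T + 1) u)) (Finset.mem_image_of_mem _ hz)
  linarith [Finset.sum_le_sum hstep]

/-- The bound `(log N + v t² / 2) / t` on level `m` of the chaining, where `N ≤ 4 ^ m` and
`v ≤ 8 k / 2 ^ m`, evaluated at `t = (3/2)^m / √k` and divided by `√k`. -/
def chainWeight (m : ℕ) : ℝ := m * Real.log 4 * (2 / 3) ^ m + 4 * (3 / 4) ^ m

lemma chainWeight_nonneg (m : ℕ) : 0 ≤ chainWeight m := by
  have := Real.log_nonneg (by norm_num : (1 : ℝ) ≤ 4)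
  unfold chainWeight
  positivity

lemma summable_chainWeight : Summable chainWeight := by
  have h₁ : Summable fun m : ℕ => (m : ℝ) ^ 1 * (2 / 3 : ℝ) ^ m :=
    summable_pow_mul_geometric_of_norm_lt_one 1 (by norm_num [abs_of_pos])
  have h₂ : Summable fun m : ℕ => (3 / 4 : ℝ) ^ m :=
    summable_geometric_of_lt_one (by norm_num) (by norm_num)
  refine ((h₁.mul_left (Real.log 4)).add (h₂.mul_left 4)).congr fun m => ?_
  simp only [chainWeight, pow_one]
  ring

lemma le_sqrt_mul_chainWeight {x v : ℝ} {k m N : ℕ} (hk : 0 < k) (hN : N ≤ 4 ^ m)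
    (hv : v * 2 ^ m ≤ 8 * k) (hx : ∀ t : ℝ, t * x ≤ Real.log N + v * t ^ 2 / 2) :
    x ≤ √k * chainWeight m := by
  have hsk : 0 < √(k : ℝ) := Real.sqrt_pos.2 (by exact_mod_cast hk)
  set t : ℝ := (3 / 2) ^ m / √k with ht
  have htpos : 0 < t := by positivity
  have hlog : Real.log N ≤ m * Real.log 4 := by
    rcases N.eq_zero_or_pos with rfl | hN0
    · simp only [CharP.cast_eq_zero, Real.log_zero]
      have := Real.log_nonneg (by norm_num : (1 : ℝ) ≤ 4)
      positivity
    · rw [← Real.log_pow]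
      exact Real.log_le_log (by exact_mod_cast hN0) (by exact_mod_cast hN)
  have hvt : v * t ^ 2 / 2 ≤ 4 * (9 / 8) ^ m := by
    have h2m : (0 : ℝ) < 2 ^ m := by positivity
    have hv' : v ≤ 8 * k / 2 ^ m := by rw [le_div_iff₀ h2m]; exact hv
    have ht2 : t ^ 2 = 2 ^ m * (9 / 8) ^ m / k := by
      rw [ht, div_pow, Real.sq_sqrt (Nat.cast_nonneg k), ← pow_mul, mul_comm, pow_mul, ← mul_pow]
      norm_num
    calc v * t ^ 2 / 2 ≤ 8 * k / 2 ^ m * t ^ 2 / 2 := by gcongr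
      _ = 4 * (9 / 8) ^ m := by rw [ht2]; field_simp; ring
  have hweight : t * (√k * chainWeight m) = m * Real.log 4 + 4 * (9 / 8) ^ m := by
    have hinv : (3 / 2 : ℝ) ^ m * (2 / 3) ^ m = 1 := by rw [← mul_pow]; norm_num
    have h98 : (9 / 8 : ℝ) ^ m = (3 / 2) ^ m * (3 / 4) ^ m := by rw [← mul_pow]; norm_num
    have htk : t * √k = (3 / 2) ^ m := by rw [ht]; field_simp
    rw [← mul_assoc, htk, chainWeight, h98]
    linear_combination (m * Real.log 4) * hinv
  refine le_of_mul_le_mul_left ?_ htpos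
  linarith [hx t]

lemma chainWeight_zero_add_sum_range_le (n : ℕ) :
    chainWeight 0 + ∑ T ∈ Finset.range n, chainWeight (n - T) ≤ ∑' m, chainWeight m := by
  have h := Finset.sum_range_reflect chainWeight (n + 1)
  rw [Finset.sum_range_succ, Nat.add_sub_cancel, Nat.sub_self] at h
  rw [add_comm, h]
  exact summable_chainWeight.sum_le_tsum _ fun m _ => chainWeight_nonneg m

def psiIncrementMax {Ω : Type} (b : ℕ × Vertex → Ω → ℝ) (k j : ℕ) (c : Vertex) (T : ℕ) (ω : Ω) :
    ℝ :=
  ((boxAt c (2 ^ (j * k))).image (boxFloor c T)).sup' ((boxAt_two_pow_nonempty c (j * k)).image _)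
    fun u => psi b k j u ω - psi b k j (boxFloor c (T + 1) u) ω

section Field

variable {Ω : Type} [MeasureSpace Ω] {b : ℕ × Vertex → Ω → ℝ}

lemma GaussianSetup.iIndepFun_sqrt_mul (hb : GaussianSetup b) (k s : ℕ) :
    iIndepFun (fun c ω => √k * b (s, c) ω) ℙ :=
  (hb.2.1.precomp (Prod.mk_right_injective s)).comp _ fun _ => measurable_const_mul _

lemma GaussianSetup.hasSubgaussianMGF_sqrt_mul (hb : GaussianSetup b) (k s : ℕ) (c : Vertex) :
    HasSubgaussianMGF (fun ω => √k * b (s, c) ω) (k * ((2 : ℝ≥0) ^ (2 * s))⁻¹) ℙ := by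
  convert (hasSubgaussianMGF_of_map_eq_gaussianReal (hb.1 (s, c)).aemeasurable
    (hb.2.2 s c)).const_mul √k using 2
  congr 1
  exact NNReal.eq (Real.sq_sqrt (Nat.cast_nonneg k)).symm

lemma GaussianSetup.hasSubgaussianMGF_psi (hb : GaussianSetup b) (k j : ℕ) (z : Vertex) :
    HasSubgaussianMGF (psi b k j z) k ℙ := by
  convert HasSubgaussianMGF.sum_of_iIndepFun (hb.iIndepFun_sqrt_mul k (j * k))
    (s := corners (j * k) z) fun c _ => hb.hasSubgaussianMGF_sqrt_mul k (j * k) c using 1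
  · rfl
  rw [Finset.sum_const, card_corners, nsmul_eq_mul]
  ext
  push_cast
  field_simp
  ring

lemma GaussianSetup.hasSubgaussianMGF_psi_sub_psi (hb : GaussianSetup b) (k j : ℕ)
    (u u' : Vertex) :
    HasSubgaussianMGF (fun ω => psi b k j u ω - psi b k j u' ω)
      (((corners (j * k) u \ corners (j * k) u').card +
        (corners (j * k) u' \ corners (j * k) u).card) * (k * ((2 : ℝ≥0) ^ (2 * (j * k)))⁻¹)) ℙ :=
  HasSubgaussianMGF.sum_sub_sum_of_iIndepFun (hb.iIndepFun_sqrt_mul k (j * k))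
    (fun _ => (hb.1 _).const_mul _) (hb.hasSubgaussianMGF_sqrt_mul k (j * k)) _ _

lemma GaussianSetup.integral_fmax_psi_le_add_sum (hb : GaussianSetup b) (k j : ℕ) (c : Vertex) :
    ∫ ω, fmax (boxAt c (2 ^ (j * k))) (fun z => psi b k j z ω) ∂ℙ ≤
      ∫ ω, psi b k j c ω ∂ℙ + ∑ T ∈ Finset.range (j * k), ∫ ω, psiIncrementMax b k j c T ω ∂ℙ := by
  have hB := boxAt_two_pow_nonempty c (j * k)
  have hfmax : ∀ ω, fmax (boxAt c (2 ^ (j * k))) (fun z => psi b k j z ω) =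
      (boxAt c (2 ^ (j * k))).sup' hB fun z => psi b k j z ω :=
    fun ω => (Finset.sup'_eq_csSup_image _ hB _).symm
  have hlevel : ∀ T, Integrable (psiIncrementMax b k j c T) ℙ := fun T =>
    integrable_finset_sup' _ fun u _ => (hb.hasSubgaussianMGF_psi_sub_psi k j _ _).integrable
  have hpsi := (hb.hasSubgaussianMGF_psi k j c).integrable
  have hsum := integrable_finsetSum (Finset.range (j * k)) fun T _ => hlevel T
  rw [← integral_finsetSum _ fun T _ => hlevel T, ← integral_add hpsi hsum]
  refine integral_mono ?_ (hpsi.add hsum) fun ω => ?_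
  · simp_rw [hfmax]
    exact integrable_finset_sup' hB fun z _ => (hb.hasSubgaussianMGF_psi k j z).integrable
  · simp only [hfmax]
    exact sup'_le_add_sum_sup'_sub hB (boxFloor c) (j * k) c (fun z _ => boxFloor_zero c z)
      (fun z hz => boxFloor_eq_corner hz) (fun T z _ => boxFloor_succ_boxFloor c z T) _

variable [IsProbabilityMeasure (ℙ : Measure Ω)]

lemma GaussianSetup.integral_psi_le (hb : GaussianSetup b) {k : ℕ} (hk : 0 < k) (j : ℕ)
    (z : Vertex) : ∫ ω, psi b k j z ω ∂ℙ ≤ √k * chainWeight 0 := by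
  refine le_sqrt_mul_chainWeight hk (N := 1) le_rfl (v := k) (by simp; linarith) fun t => ?_
  simpa using mul_integral_sup'_le_of_hasSubgaussianMGF (Finset.singleton_nonempty z)
    (fun _ _ => hb.hasSubgaussianMGF_psi k j z) t

lemma GaussianSetup.integral_psiIncrementMax_le (hb : GaussianSetup b) {k : ℕ} (hk : 0 < k)
    {j T : ℕ} (hT : T < j * k) (c : Vertex) :
    ∫ ω, psiIncrementMax b k j c T ω ∂ℙ ≤ √k * chainWeight (j * k - T) := by
  set d : ℝ≥0 :=
    ((4 * 2 ^ (T + 1) * 2 ^ (j * k) : ℕ) : ℝ≥0) * (k * ((2 : ℝ≥0) ^ (2 * (j * k)))⁻¹)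
  have hsub : ∀ u, HasSubgaussianMGF
      (fun ω => psi b k j u ω - psi b k j (boxFloor c (T + 1) u) ω) d ℙ := fun u =>
    (hb.hasSubgaussianMGF_psi_sub_psi k j _ _).mono_s8 <| mul_le_mul_of_nonneg_right
      (by exact_mod_cast card_corners_sdiff_add_card_sdiff_boxFloor_le _ _ c u) zero_le
  refine le_sqrt_mul_chainWeight hk (card_image_boxFloor_le c hT.le) (v := d) (le_of_eq ?_)
    (mul_integral_sup'_le_of_hasSubgaussianMGF _ fun u _ => hsub u)
  have hlev : (2 : ℝ) ^ (j * k) = 2 ^ T * 2 ^ (j * k - T) := by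
    rw [← pow_add, Nat.add_sub_cancel' hT.le]
  have hsq : (2 : ℝ) ^ (2 * (j * k)) = 2 ^ (j * k) * 2 ^ (j * k) := by rw [two_mul, pow_add]
  simp only [d, NNReal.coe_mul, NNReal.coe_natCast, NNReal.coe_inv, NNReal.coe_pow,
    NNReal.coe_ofNat, Nat.cast_mul, Nat.cast_pow, Nat.cast_ofNat]
  rw [hsq, pow_succ, hlev]
  field_simp
  ring

end Field

/-- **Lemma 2.7.** There is a universal constant C such that for all k ≥ 1, all j and every
box B ∈ 𝓑_{jk} (with lower-left corner c), E max_{z ∈ B} ψ_{j,z} ≤ C √k. -/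
theorem statement8 :
    ∃ C : ℝ, ∀ (Ω : Type) [MeasureSpace Ω] [IsProbabilityMeasure (ℙ : Measure Ω)]
      (b : ℕ × Vertex → Ω → ℝ), GaussianSetup b →
      ∀ k : ℕ, 1 ≤ k → ∀ j : ℕ, ∀ c : Vertex,
        (∫ ω, fmax (boxAt c (2 ^ (j * k))) (fun z => psi b k j z ω) ∂ℙ) ≤
          C * Real.sqrt k := by
  refine ⟨∑' m, chainWeight m, ?_⟩
  intro Ω _ _ b hb k hk j c
  calc _ ≤ _ := hb.integral_fmax_psi_le_add_sum k j c
    _ ≤ √k * chainWeight 0 + ∑ T ∈ Finset.range (j * k), √k * chainWeight (j * k - T) :=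
        add_le_add (hb.integral_psi_le hk j c)
          (Finset.sum_le_sum fun T hT =>
            hb.integral_psiIncrementMax_le hk (Finset.mem_range.1 hT) c)
    _ ≤ (∑' m, chainWeight m) * √k := by
        rw [← Finset.mul_sum, ← mul_add, mul_comm]
        gcongr
        exact chainWeight_zero_add_sum_range_le _

end
end
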